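/- arXiv:1901.04113 — 2 statements merged into one kernel-verified Lean document; each statement's English description precedes it below -/
import Mathlib

section
/- Let (R,m) be an F-finite reduced Noetherian local ring of prime characteristic p. Suppose T is an ideal of R such that T ∩ R^o ≠ ∅, φ(T) ⊆ T for every e ≥ 1 and every additive map φ : R → R satisfying φ(r^{p^e}·x) = r·φ(x), and T ⊆ J for every ideal J with J ∩ R^o ≠ ∅ that is stable under all such maps φ (so T is the test ideal of the full Cartier algebra of R, which equals the big test ideal τ_b(R) by a result of Hara–Takagi). Then T is a strong test ideal: T·(I*) = T·I for every ideal I of R. -/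
/-!
Let `d ∈ T ∩ R^o` and let `x ∈ I*`, witnessed by `c ∈ R^o` with `c x^{p^e} ∈ I^{[p^e]}` for
`e ≥ N`. The ideal generated by all `φ (d c)`, for `p^{-e}`-linear `φ` with `e > N`, is stable
under every `p^{-e'}`-linear map (compositions of such maps are again such maps), and it meets
`R^o`: since `R` is F-finite and reduced, `F_* R` admits, at each minimal prime `P`, a functional
not vanishing modulo `P` on a given element outside `P`, and prime avoidance over the finitely
many minimal primes does the rest. By minimality it contains `T`. Finally
`φ (d c) x = φ (d c x^{p^e}) ∈ φ (T I^{[p^e]}) ⊆ T I`, because `T` is `φ`-stable.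
-/

/-- The `q`-th Frobenius power `I^{[q]}` of an ideal `I`: the ideal generated by
the `q`-th powers of the elements of `I`. -/
def frobeniusPower {R : Type*} [CommRing R] (I : Ideal R) (q : ℕ) : Ideal R :=
  Ideal.span ((fun a => a ^ q) '' (I : Set R))

/-- `Rreg c` means `c ∈ R^o`, i.e. `c` avoids every minimal prime of `R`. -/
def Rreg {R : Type*} [CommRing R] (c : R) : Prop :=
  ∀ P ∈ minimalPrimes R, c ∉ P

/-- `x` lies in the tight closure `I*` of `I` (characteristic `p`):
there is `c ∈ R^o` with `c * x^(p^e) ∈ I^{[p^e]}` for all `e ≫ 0`. -/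
def InTightClosure {R : Type*} [CommRing R] (p : ℕ) (I : Ideal R) (x : R) : Prop :=
  ∃ c, Rreg c ∧ ∃ N : ℕ, ∀ e ≥ N, c * x ^ p ^ e ∈ frobeniusPower I (p ^ e)

/-- The tight closure `I*` of `I`, as an ideal: the span of the set of elements in the
tight closure (this set is already an ideal, so taking the span is harmless). -/
def tightClosure {R : Type*} [CommRing R] (p : ℕ) (I : Ideal R) : Ideal R :=
  Ideal.span {x | InTightClosure p I x}

section Cartier

variable {R : Type*} [CommRing R]

def IsCartierMap (p e : ℕ) (φ : R →+ R) : Prop :=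
  ∀ r x : R, φ (r ^ p ^ e * x) = r * φ x

def IsCartierStable (p : ℕ) (J : Ideal R) : Prop :=
  ∀ e : ℕ, 1 ≤ e → ∀ φ : R →+ R, IsCartierMap p e φ → ∀ x ∈ J, φ x ∈ J

namespace IsCartierMap

variable {p e e' : ℕ} {φ ψ : R →+ R}

lemma id : IsCartierMap p 0 (AddMonoidHom.id R) := by
  intro r x
  simp

lemma comp (hφ : IsCartierMap p e φ) (hψ : IsCartierMap p e' ψ) :
    IsCartierMap p (e + e') (ψ.comp φ) := by
  intro r x
  rw [AddMonoidHom.comp_apply, pow_add, pow_mul', hφ, hψ, AddMonoidHom.comp_apply]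

lemma comp_mulLeft (hφ : IsCartierMap p e φ) (s : R) :
    IsCartierMap p e (φ.comp (AddMonoidHom.mulLeft s)) := by
  intro r x
  simp only [AddMonoidHom.comp_apply, AddMonoidHom.coe_mulLeft, mul_left_comm s]
  exact hφ r (s * x)

lemma map_mul_pow (hφ : IsCartierMap p e φ) (a x : R) : φ (a * x ^ p ^ e) = φ a * x := by
  rw [mul_comm a, hφ, mul_comm]

lemma map_mem_mul_frobeniusPower (hφ : IsCartierMap p e φ) {T I : Ideal R}
    (hT : ∀ t ∈ T, φ t ∈ T) {z : R} (hz : z ∈ T * frobeniusPower I (p ^ e)) :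
    φ z ∈ T * I := by
  induction hz using Submodule.mul_induction_on' with
  | mem_mul_mem t ht y hy =>
    induction hy using Submodule.span_induction generalizing t with
    | mem y hy =>
      obtain ⟨b, hb, rfl⟩ := hy
      rw [hφ.map_mul_pow]
      exact Ideal.mul_mem_mul (hT t ht) hb
    | zero => simp
    | add y z _ _ hy hz => rw [mul_add, map_add]; exact add_mem (hy t ht) (hz t ht)
    | smul r y _ hy => rw [smul_eq_mul, ← mul_assoc]; exact hy _ (T.mul_mem_right r ht)
  | add y z _ _ hy hz => rw [map_add]; exact add_mem hy hz

end IsCartierMap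

end Cartier

lemma Module.exists_linearMap_apply_notMem_of_mem_minimalPrimes {R M : Type*} [CommRing R]
    [IsReduced R] [AddCommGroup M] [Module R M] [Module.FinitePresentation R M]
    {P : Ideal R} (hP : P ∈ minimalPrimes R) {m : M} (hm : ∀ s ∉ P, s • m ≠ 0) :
    ∃ f : M →ₗ[R] R, f m ∉ P := by
  -- `R_P` is a field, so a functional on `M_P` is nonzero at `m / 1`; it lifts to `M → R` up to
  -- a unit of `R_P`.
  have := hP.1.1
  let Rₚ := Localization.AtPrime P
  have : Ring.KrullDimLE 0 Rₚ := .of_isLocalization P hP Rₚ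
  let : Field Rₚ := Ring.KrullDimLE.isField_of_isReduced.toField
  let mk := LocalizedModule.mkLinearMap P.primeCompl M
  have hm' : mk m ≠ 0 := by
    rw [Ne, IsLocalizedModule.eq_zero_iff P.primeCompl mk]
    rintro ⟨s, hs⟩
    exact hm s s.2 hs
  obtain ⟨g, hg⟩ := Module.Projective.exists_dual_ne_zero Rₚ hm'
  obtain ⟨f, s, hfs⟩ := Module.FinitePresentation.exists_lift_of_isLocalizedModule P.primeCompl
    (Algebra.linearMap R Rₚ) (g.restrictScalars R ∘ₗ mk)
  refine ⟨f, fun hfm => ?_⟩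
  have hunit : IsUnit (algebraMap R Rₚ (f m)) := by
    refine isUnit_iff_ne_zero.mpr ?_
    have := LinearMap.congr_fun hfs m
    rw [LinearMap.comp_apply, Algebra.linearMap_apply] at this
    rw [this, LinearMap.smul_apply, Submonoid.smul_def, Algebra.smul_def]
    exact mul_ne_zero (IsLocalization.map_units Rₚ s).ne_zero hg
  exact (IsLocalization.AtPrime.isUnit_to_map_iff Rₚ P (f m)).mp hunit hfm

/-- `F_* R`: a copy of `R` that is an `R`-module through the `p`-th power map, so that `R`-linear
maps `F_* R → R` are the `p⁻¹`-linear maps `R → R`. -/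
def FrobeniusPushforward (R : Type*) (_p : ℕ) : Type _ := R

namespace FrobeniusPushforward

variable {R : Type*} [CommRing R] {p : ℕ} [Fact p.Prime] [CharP R p]

instance : AddCommGroup (FrobeniusPushforward R p) := inferInstanceAs (AddCommGroup R)

instance : Module R (FrobeniusPushforward R p) := Module.compHom R (frobenius R p)

def of : R ≃+ FrobeniusPushforward R p := AddEquiv.refl R

lemma smul_of (r x : R) : r • of x = (of (r ^ p * x) : FrobeniusPushforward R p) := rfl

lemma isCartierMap_comp_of (f : FrobeniusPushforward R p →ₗ[R] R) :
    IsCartierMap p 1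
      (f.toAddMonoidHom.comp (of : R ≃+ FrobeniusPushforward R p).toAddMonoidHom) := by
  intro r x
  simp only [pow_one, AddMonoidHom.comp_apply, AddEquiv.coe_toAddMonoidHom,
    LinearMap.toAddMonoidHom_coe, ← smul_of, map_smul, smul_eq_mul]

end FrobeniusPushforward

section Existence

variable {R : Type*} [CommRing R] [IsNoetherianRing R] [IsReduced R]
  {p : ℕ} [Fact p.Prime] [CharP R p]

lemma exists_isCartierMap_one_apply_notMem (hFF : (frobenius R p).Finite)
    {P : Ideal R} (hP : P ∈ minimalPrimes R) {d : R} (hd : d ∉ P) :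
    ∃ φ : R →+ R, IsCartierMap p 1 φ ∧ φ d ∉ P := by
  have : Module.Finite R (FrobeniusPushforward R p) := hFF
  have := Module.finitePresentation_of_finite R (FrobeniusPushforward R p)
  have := hP.1.1
  obtain ⟨f, hf⟩ := Module.exists_linearMap_apply_notMem_of_mem_minimalPrimes hP
    (m := FrobeniusPushforward.of (p := p) d) fun s hs hsd => by
      rw [FrobeniusPushforward.smul_of, AddEquiv.map_eq_zero_iff] at hsd
      rcases ‹P.IsPrime›.mem_or_mem (hsd ▸ P.zero_mem) with hs' | hd'
      exacts [hs (‹P.IsPrime›.mem_of_pow_mem p hs'), hd hd']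
  exact ⟨_, FrobeniusPushforward.isCartierMap_comp_of f, hf⟩

lemma exists_isCartierMap_apply_notMem (hFF : (frobenius R p).Finite)
    {P : Ideal R} (hP : P ∈ minimalPrimes R) (e : ℕ) {d : R} (hd : d ∉ P) :
    ∃ φ : R →+ R, IsCartierMap p e φ ∧ φ d ∉ P := by
  induction e with
  | zero => exact ⟨_, IsCartierMap.id, hd⟩
  | succ e ih =>
    obtain ⟨φ, hφ, hφd⟩ := ih
    obtain ⟨ψ, hψ, hψd⟩ := exists_isCartierMap_one_apply_notMem hFF hP hφd
    exact ⟨ψ.comp φ, hφ.comp hψ, hψd⟩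

end Existence

section CartierSpan

variable {R : Type*} [CommRing R]

def cartierSpan (p N : ℕ) (a : R) : Ideal R :=
  Ideal.span {y | ∃ e ≥ N, ∃ φ : R →+ R, IsCartierMap p e φ ∧ φ a = y}

variable {p : ℕ}

lemma isCartierStable_cartierSpan (N : ℕ) (a : R) : IsCartierStable p (cartierSpan p N a) := by
  intro e' _ ψ hψ y hy
  induction hy using Submodule.span_induction generalizing ψ with
  | mem y hy =>
    obtain ⟨e, he, φ, hφ, rfl⟩ := hy
    exact Ideal.subset_span ⟨e + e', by omega, ψ.comp φ, hφ.comp hψ, rfl⟩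
  | zero => simp
  | add y z _ _ hy hz => rw [map_add]; exact add_mem (hy ψ hψ) (hz ψ hψ)
  | smul r y _ hy => exact hy _ (hψ.comp_mulLeft r)

lemma mul_mem_of_mem_cartierSpan {T I : Ideal R} (hT : IsCartierStable p T) {N : ℕ} (hN : 1 ≤ N)
    {a x : R} (hax : ∀ e ≥ N, a * x ^ p ^ e ∈ T * frobeniusPower I (p ^ e))
    {y : R} (hy : y ∈ cartierSpan p N a) : y * x ∈ T * I := by
  induction hy using Submodule.span_induction with
  | mem y hy =>
    obtain ⟨e, he, φ, hφ, rfl⟩ := hy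
    rw [← hφ.map_mul_pow]
    exact hφ.map_mem_mul_frobeniusPower (hT e (hN.trans he) φ hφ) (hax e he)
  | zero => simp
  | add y z _ _ hy hz => rw [add_mul]; exact add_mem hy hz
  | smul r y _ hy => rw [smul_eq_mul, mul_assoc]; exact Ideal.mul_mem_left _ r hy

lemma exists_rreg_mem_of_forall_not_le [IsNoetherianRing R] {J : Ideal R}
    (hJ : ∀ P ∈ minimalPrimes R, ¬ J ≤ P) : ∃ c ∈ J, Rreg c := by
  by_contra! h
  have hcover : (J : Set R) ⊆ ⋃ P ∈ minimalPrimes R, P := fun c hc => by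
    simpa [Rreg] using h c hc
  obtain ⟨P, hP, hJP⟩ := (Ideal.subset_union_prime_finite
    (minimalPrimes.finite_of_isNoetherianRing R) ⊥ ⊥ fun P hP _ _ => hP.1.1).mp hcover
  exact hJ P hP hJP

lemma exists_rreg_mem_cartierSpan [IsNoetherianRing R] [IsReduced R] [Fact p.Prime] [CharP R p]
    (hFF : (frobenius R p).Finite) (N : ℕ) {a : R} (ha : Rreg a) :
    ∃ c ∈ cartierSpan p N a, Rreg c := by
  refine exists_rreg_mem_of_forall_not_le fun P hP hle => ?_
  obtain ⟨φ, hφ, hφa⟩ := exists_isCartierMap_apply_notMem hFF hP N (ha P hP)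
  exact hφa (hle (Ideal.subset_span ⟨N, le_rfl, φ, hφ, rfl⟩))

end CartierSpan

section TightClosure

variable {R : Type*} [CommRing R]

lemma Rreg.one : Rreg (1 : R) := fun P hP h1 => hP.1.1.ne_top ((Ideal.eq_top_iff_one P).mpr h1)

lemma Rreg.mul {a b : R} (ha : Rreg a) (hb : Rreg b) : Rreg (a * b) := fun P hP hab =>
  (hP.1.1.mem_or_mem hab).elim (ha P hP) (hb P hP)

lemma le_tightClosure (p : ℕ) (I : Ideal R) : I ≤ tightClosure p I := fun x hx =>
  Ideal.subset_span ⟨1, Rreg.one, 0, fun _ _ => by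
    rw [one_mul]; exact Ideal.subset_span ⟨x, hx, rfl⟩⟩

lemma mul_tightClosure_le {p : ℕ} {T I K : Ideal R}
    (h : ∀ x, InTightClosure p I x → ∀ t ∈ T, t * x ∈ K) : T * tightClosure p I ≤ K := by
  refine Ideal.mul_le.mpr fun t ht y hy => ?_
  induction hy using Submodule.span_induction generalizing t with
  | mem x hx => exact h x hx t ht
  | zero => simp
  | add y z _ _ hy hz => rw [mul_add]; exact add_mem (hy t ht) (hz t ht)
  | smul r y _ hy => rw [smul_eq_mul, mul_left_comm]; exact K.mul_mem_left r (hy t ht)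

end TightClosure

theorem big_test_ideal_is_strong_test_ideal_general {R : Type*} [CommRing R] [IsNoetherianRing R]
    [IsReduced R] (p : ℕ) [Fact p.Prime] [CharP R p]
    (hFF : (frobenius R p).Finite)
    (T : Ideal R)
    (hTreg : ∃ c ∈ T, Rreg c)
    (hTcomp : ∀ e : ℕ, 1 ≤ e → ∀ φ : R →+ R,
      (∀ r x : R, φ (r ^ p ^ e * x) = r * φ x) → ∀ x ∈ T, φ x ∈ T)
    (hTmin : ∀ J : Ideal R, (∃ c ∈ J, Rreg c) →
      (∀ e : ℕ, 1 ≤ e → ∀ φ : R →+ R,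
        (∀ r x : R, φ (r ^ p ^ e * x) = r * φ x) → ∀ x ∈ J, φ x ∈ J) → T ≤ J) :
    ∀ I : Ideal R, T * tightClosure p I = T * I := by
  intro I
  obtain ⟨d, hdT, hd⟩ := hTreg
  have hTstable : IsCartierStable p T := hTcomp
  refine le_antisymm (mul_tightClosure_le fun x hx t ht => ?_)
    (Ideal.mul_mono_right (le_tightClosure p I))
  obtain ⟨c, hc, N, hcx⟩ := hx
  have hT : T ≤ cartierSpan p (N + 1) (d * c) :=
    hTmin _ (exists_rreg_mem_cartierSpan hFF _ (hd.mul hc)) (isCartierStable_cartierSpan _ _)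
  refine mul_mem_of_mem_cartierSpan hTstable N.succ_pos (fun e he => ?_) (hT ht)
  rw [mul_assoc]
  exact Ideal.mul_mem_mul hdT (hcx e (by omega))

/-- The test ideal of the full Cartier algebra (the big test ideal
`τ_b(R)`), i.e. the smallest ideal meeting `R^o` stable under all `p^{-e}`-linear maps,
is a strong test ideal. -/
theorem big_test_ideal_is_strong_test_ideal {R : Type*} [CommRing R] [IsNoetherianRing R]
    [IsLocalRing R] [IsReduced R] (p : ℕ) [Fact p.Prime] [CharP R p]
    (hFF : (frobenius R p).Finite)
    (T : Ideal R)
    (hTreg : ∃ c ∈ T, Rreg c)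
    (hTcomp : ∀ e : ℕ, 1 ≤ e → ∀ φ : R →+ R,
      (∀ r x : R, φ (r ^ p ^ e * x) = r * φ x) → ∀ x ∈ T, φ x ∈ T)
    (hTmin : ∀ J : Ideal R, (∃ c ∈ J, Rreg c) →
      (∀ e : ℕ, 1 ≤ e → ∀ φ : R →+ R,
        (∀ r x : R, φ (r ^ p ^ e * x) = r * φ x) → ∀ x ∈ J, φ x ∈ J) → T ≤ J) :
    ∀ I : Ideal R, T * tightClosure p I = T * I :=
  big_test_ideal_is_strong_test_ideal_general p hFF T hTreg hTcomp hTmin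
end

section
/- Let k be a perfect field of prime characteristic p, S = k[[x_1,…,x_n]], q = p^e with e ≥ 1, and z = (x_1·x_2⋯x_n)^{q−1}. Let F_1, …, F_m be nonempty subsets of {1,…,n} that are pairwise incomparable under inclusion (the facets of a simplicial complex Δ), and let I = ⋂_{j=1}^m P_{F_j^c} be the associated Stanley–Reisner ideal, where F^c = {1,…,n} \ F and P_A = (x_i : i ∈ A). Set x_F = ∏_{i∈F} x_i and J_0 = I + (x_{F_1}, …, x_{F_m}). Then: (1) z·J_0 ⊆ J_0^{[q]}; (2) J_0 is not contained in P_{F_j^c} for any j; and (3) for every ideal J of S with I ⊆ J, z·J ⊆ J^{[q]}, and J not contained in any P_{F_j^c}, one has J_0 ⊆ J. Consequently, the test ideal τ(R,φ) of R = S/I with respect to the map φ induced by z is the ideal of R generated by the images of the facet monomials x_{F_1}, …, x_{F_m}. -/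
/-- The prime ideal of `k[[x₁,…,xₙ]]` generated by the variables `xᵢ`, `i ∈ A`. -/
noncomputable def varIdeal (k : Type*) [Field k] {n : ℕ} (A : Finset (Fin n)) :
    Ideal (MvPowerSeries (Fin n) k) :=
  Ideal.span ((fun i => (MvPowerSeries.X i : MvPowerSeries (Fin n) k)) '' (A : Set (Fin n)))

open MvPowerSeries

lemma Nat.le_and_eq_of_add_mul_eq {q x t D c : ℕ} (hc : c < q) (h : x + q * t = q * D + c) :
    t ≤ D ∧ x = q * (D - t) + c := by
  have htD : t ≤ D := by
    by_contra! hlt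
    have := Nat.mul_le_mul_left q hlt
    rw [Nat.mul_succ] at this
    omega
  refine ⟨htD, ?_⟩
  rw [Nat.mul_sub]
  have := Nat.mul_le_mul_left q htD
  omega

lemma Finsupp.le_and_eq_of_add_smul_eq {σ : Type*} {q : ℕ} {x t D c : σ →₀ ℕ}
    (hc : ∀ i, c i < q) (h : x + q • t = q • D + c) : t ≤ D ∧ x = q • (D - t) + c := by
  have key i := Nat.le_and_eq_of_add_mul_eq (hc i) (by simpa using congrArg (· i) h)
  exact ⟨fun i => (key i).1, Finsupp.ext fun i => by simpa using (key i).2⟩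

lemma Nat.ceilDiv_le_self {q : ℕ} (hq : 0 < q) (a : ℕ) : a ⌈/⌉ q ≤ a :=
  (ceilDiv_le_iff_le_mul hq).2 (Nat.le_mul_of_pos_left a hq)

lemma Nat.ceilDiv_eq_zero_iff {q : ℕ} (hq : 0 < q) {a : ℕ} : a ⌈/⌉ q = 0 ↔ a = 0 := by
  rw [← nonpos_iff_eq_zero, ceilDiv_le_iff_le_mul hq, mul_zero, nonpos_iff_eq_zero]

lemma Nat.le_one_of_ceilDiv_eq_self {q a : ℕ} (hq : 1 < q) (h : a ⌈/⌉ q = a) : a ≤ 1 := by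
  by_contra! ha
  have hlt : a ⌈/⌉ q < a := by
    rw [Nat.ceilDiv_eq_add_pred_div, Nat.div_lt_iff_lt_mul (by omega)]
    have : a + q ≤ a * q := by nlinarith
    omega
  omega

namespace Finsupp

variable {σ : Type*} {q : ℕ}

lemma ceilDiv_le_self (hq : 0 < q) (d : σ →₀ ℕ) : d ⌈/⌉ q ≤ d :=
  fun i => Nat.ceilDiv_le_self hq (d i)

lemma support_ceilDiv (hq : 0 < q) (d : σ →₀ ℕ) : (d ⌈/⌉ q).support = d.support := by
  ext i
  simp [Nat.ceilDiv_eq_zero_iff hq]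

end Finsupp

def IsFrobeniusCompatible {R : Type*} [CommRing R] (z : R) (q : ℕ) (J : Ideal R) : Prop :=
  ∀ f ∈ J, z * f ∈ frobeniusPower J q

lemma isFrobeniusCompatible_span {R : Type*} [CommRing R] {z : R} {q : ℕ} {G : Set R}
    (h : ∀ g ∈ G, z * g ∈ frobeniusPower (Ideal.span G) q) :
    IsFrobeniusCompatible z q (Ideal.span G) := by
  intro f hf
  induction hf using Submodule.span_induction with
  | mem g hg => exact h g hg
  | zero => simp
  | add x y _ _ hx hy =>
    rw [mul_add]
    exact add_mem hx hy
  | smul a x _ hx =>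
    rw [smul_eq_mul, mul_left_comm]
    exact Ideal.mul_mem_left _ _ hx

lemma isFrobeniusCompatible_span_prod {R σ : Type*} [CommRing R] [Fintype σ] (x : σ → R)
    {q : ℕ} (hq : 0 < q) (𝓐 : Set (Finset σ)) :
    IsFrobeniusCompatible ((∏ i, x i) ^ (q - 1)) q
      (Ideal.span ((fun A => ∏ i ∈ A, x i) '' 𝓐)) := by
  classical
  refine isFrobeniusCompatible_span ?_
  rintro _ ⟨A, hA, rfl⟩
  have hz : (∏ i, x i) ^ (q - 1) * ∏ i ∈ A, x i =
      (∏ i ∈ A, x i) ^ q * (∏ i ∈ Aᶜ, x i) ^ (q - 1) := by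
    obtain ⟨r, rfl⟩ : ∃ r, q = r + 1 := ⟨q - 1, by omega⟩
    rw [← Finset.prod_mul_prod_compl A, Nat.add_sub_cancel, mul_pow, pow_succ]
    ring
  rw [hz]
  exact Ideal.mul_mem_right _ _ (Ideal.subset_span ⟨_, Ideal.subset_span ⟨A, hA, rfl⟩, rfl⟩)

namespace MvPowerSeries

section Squarefree

variable {σ R : Type*} [CommSemiring R]

noncomputable def sqfreeExp (B : Finset σ) : σ →₀ ℕ := ∑ i ∈ B, Finsupp.single i 1

lemma sqfreeExp_apply [DecidableEq σ] (B : Finset σ) (i : σ) :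
    sqfreeExp B i = if i ∈ B then 1 else 0 := by
  simp [sqfreeExp, Finsupp.finsetSum_apply, Finsupp.single_apply]

lemma sqfreeExp_le_iff {B : Finset σ} {d : σ →₀ ℕ} : sqfreeExp B ≤ d ↔ B ⊆ d.support := by
  classical
  simp only [Finsupp.le_def, sqfreeExp_apply, Finset.subset_iff, Finsupp.mem_support_iff]
  refine ⟨fun h i hi => ?_, fun h i => ?_⟩
  · have := h i
    rw [if_pos hi] at this
    omega
  · split_ifs with hi
    · exact Nat.one_le_iff_ne_zero.mpr (h hi)
    · exact Nat.zero_le _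

lemma sqfreeExp_support_eq_self_of_ceilDiv_eq_self {q : ℕ} (hq : 1 < q) {d : σ →₀ ℕ}
    (h : d ⌈/⌉ q = d) : sqfreeExp d.support = d := by
  classical
  ext i
  have := Nat.le_one_of_ceilDiv_eq_self hq (congrArg (· i) h)
  rw [sqfreeExp_apply]
  split_ifs with hi <;> simp only [Finsupp.mem_support_iff] at hi <;> omega

lemma prod_X_eq_monomial (B : Finset σ) :
    ∏ i ∈ B, (X i : MvPowerSeries σ R) = monomial (sqfreeExp B) 1 := by
  rw [sqfreeExp, ← Finset.prod_const_one (s := B) (M := R), ← prod_monomial]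
  rfl

lemma monomial_one_dvd_of_forall_le {e : σ →₀ ℕ} {f : MvPowerSeries σ R}
    (h : ∀ d, coeff d f ≠ 0 → e ≤ d) : monomial e 1 ∣ f := by
  let u : MvPowerSeries σ R := fun d => coeff (d + e) f
  refine ⟨u, ext fun d => ?_⟩
  rw [coeff_monomial_mul, one_mul]
  split_ifs with hle
  · exact congrArg (coeff · f) (tsub_add_cancel_of_le hle).symm
  · by_contra hne
    exact hle (h d hne)

lemma prod_X_pow_eq_monomial [Fintype σ] (n : ℕ) :
    (∏ i, (X i : MvPowerSeries σ R)) ^ n = monomial (n • sqfreeExp Finset.univ) 1 := by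
  rw [prod_X_eq_monomial, monomial_pow, one_pow]

lemma monomial_one_mem_of_forall_le {R : Type*} [CommRing R] {J : Ideal (MvPowerSeries σ R)}
    {f : MvPowerSeries σ R} (hf : f ∈ J) {e : σ →₀ ℕ} (hle : ∀ d, coeff d f ≠ 0 → e ≤ d)
    (he : IsUnit (coeff e f)) : monomial e 1 ∈ J := by
  obtain ⟨u, rfl⟩ := monomial_one_dvd_of_forall_le hle
  have hu : IsUnit u := by
    rw [isUnit_iff_constantCoeff, ← coeff_zero_eq_constantCoeff]
    simpa [coeff_monomial_mul] using he
  exact (Ideal.mul_unit_mem_iff_mem J hu).1 hf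

end Squarefree

section Decomposition

variable {σ R : Type*} [CommSemiring R] [Fintype σ]

lemma mem_span_prod_X_of_support_mem (𝓑 : Set (Finset σ)) {f : MvPowerSeries σ R}
    (h : ∀ d, coeff d f ≠ 0 → d.support ∈ 𝓑) :
    f ∈ Ideal.span ((fun B => ∏ i ∈ B, X i) '' 𝓑) := by
  classical
  let part (B : Finset σ) : MvPowerSeries σ R := fun d => if d.support = B then coeff d f else 0
  have hf : f = ∑ B, part B := by
    ext d
    rw [map_sum]
    change _ = ∑ B, if d.support = B then coeff d f else 0
    rw [Finset.sum_ite_eq, if_pos (Finset.mem_univ _)]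
  rw [hf]
  refine Ideal.sum_mem _ fun B _ => ?_
  by_cases hB : B ∈ 𝓑
  · refine Ideal.mem_of_dvd _ ?_ (Ideal.subset_span ⟨B, hB, rfl⟩)
    change ∏ i ∈ B, X i ∣ part B
    rw [prod_X_eq_monomial]
    refine monomial_one_dvd_of_forall_le fun d hd => ?_
    change (if d.support = B then coeff d f else 0) ≠ 0 at hd
    split_ifs at hd with hdB
    · exact sqfreeExp_le_iff.2 hdB.ge
    · exact absurd rfl hd
  · have : part B = 0 := by
      ext d
      change (if d.support = B then coeff d f else 0) = 0
      split_ifs with hdB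
      · by_contra hne
        exact hB (hdB ▸ h d hne)
      · rfl
    rw [this]
    exact zero_mem _

lemma mem_span_X_image_iff {s : Set σ} {f : MvPowerSeries σ R} :
    f ∈ Ideal.span (X '' s) ↔ ∀ d, coeff d f ≠ 0 → ∃ i ∈ s, d i ≠ 0 := by
  classical
  constructor
  · intro hf
    induction hf using Submodule.span_induction with
    | mem x hx =>
      obtain ⟨i, hi, rfl⟩ := hx
      intro d hd
      rw [coeff_X] at hd
      split_ifs at hd with hdi
      · exact ⟨i, hi, by simp [hdi]⟩
      · exact absurd rfl hd
    | zero => simp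
    | add x y _ _ hx hy =>
      intro d hd
      rw [map_add] at hd
      by_cases hxd : coeff d x = 0
      · exact hy d (by rwa [hxd, zero_add] at hd)
      · exact hx d hxd
    | smul a x _ hx =>
      intro d hd
      rw [smul_eq_mul, coeff_mul] at hd
      obtain ⟨⟨d₁, d₂⟩, hd₁₂, hne⟩ := Finset.exists_ne_zero_of_sum_ne_zero hd
      obtain ⟨i, hi, hd₂i⟩ := hx d₂ (right_ne_zero_of_mul hne)
      rw [Finset.HasAntidiagonal.mem_antidiagonal] at hd₁₂
      refine ⟨i, hi, fun hdi => hd₂i ?_⟩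
      rw [← hd₁₂, Finsupp.add_apply] at hdi
      exact Nat.eq_zero_of_add_eq_zero_left hdi
  · intro h
    refine Ideal.span_le.2 ?_ (mem_span_prod_X_of_support_mem {B | ∃ i ∈ B, i ∈ s} fun d hd => ?_)
    · rintro _ ⟨B, ⟨i, hiB, his⟩, rfl⟩
      exact Ideal.mem_of_dvd _ (Finset.dvd_prod_of_mem X hiB) (Ideal.subset_span ⟨i, his, rfl⟩)
    · obtain ⟨i, his, hdi⟩ := h d hd
      exact ⟨i, Finsupp.mem_support_iff.2 hdi, his⟩

end Decomposition

section FrobeniusRoot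

variable {σ k : Type*} [CommRing k] (p e : ℕ) [ExpChar k p]

lemma coeff_smul_pow_expChar_pow (f : MvPowerSeries σ k) (d : σ →₀ ℕ) :
    coeff (p ^ e • d) (f ^ p ^ e) = coeff d f ^ p ^ e := by
  rw [← map_iterateFrobenius_expand p (expChar_ne_zero k p), coeff_map, coeff_expand_smul,
    iterateFrobenius_def]

lemma coeff_pow_expChar_pow_of_not_dvd (f : MvPowerSeries σ k) {d : σ →₀ ℕ} {i : σ}
    (h : ¬ p ^ e ∣ d i) : coeff d (f ^ p ^ e) = 0 := by
  rw [← map_iterateFrobenius_expand p (expChar_ne_zero k p), coeff_map,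
    coeff_expand_of_not_dvd _ _ _ h, map_zero]

variable [PerfectRing k p]

noncomputable def frobeniusRoot (c : σ →₀ ℕ) : MvPowerSeries σ k →+ MvPowerSeries σ k where
  toFun f d := (iterateFrobeniusEquiv k p e).symm (coeff (p ^ e • d + c) f)
  map_zero' := by
    ext d
    change (iterateFrobeniusEquiv k p e).symm (coeff _ 0) = coeff d 0
    simp
  map_add' f g := by
    ext d
    change (iterateFrobeniusEquiv k p e).symm (coeff _ (f + g)) =
      (iterateFrobeniusEquiv k p e).symm (coeff _ f) +
        (iterateFrobeniusEquiv k p e).symm (coeff _ g)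
    simp

lemma coeff_frobeniusRoot (c d : σ →₀ ℕ) (f : MvPowerSeries σ k) :
    coeff d (frobeniusRoot p e c f) =
      (iterateFrobeniusEquiv k p e).symm (coeff (p ^ e • d + c) f) :=
  rfl

lemma frobeniusRoot_mul_pow {c : σ →₀ ℕ} (hc : ∀ i, c i < p ^ e) (a g : MvPowerSeries σ k) :
    frobeniusRoot p e c (a * g ^ p ^ e) = frobeniusRoot p e c a * g := by
  classical
  have hq : 0 < p ^ e := Nat.pos_of_ne_zero (pow_ne_zero e (expChar_ne_zero k p))
  ext D
  rw [coeff_frobeniusRoot, coeff_mul, coeff_mul, map_sum]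
  symm
  refine Finset.sum_of_injOn (fun y => (p ^ e • y.1 + c, p ^ e • y.2)) ?_ ?_ ?_ ?_
  · rintro ⟨y₁, y₂⟩ - ⟨y₁', y₂'⟩ - h
    simp only [Prod.mk.injEq, add_left_inj] at h
    simp [smul_right_injective _ hq.ne' h.1, smul_right_injective _ hq.ne' h.2]
  · rintro ⟨y₁, y₂⟩ hy
    rw [Finset.mem_coe, Finset.HasAntidiagonal.mem_antidiagonal] at hy
    rw [Finset.mem_coe, Finset.HasAntidiagonal.mem_antidiagonal, ← hy, smul_add]
    exact add_right_comm _ _ _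
  -- off the image, some `x₂ i` is not a multiple of `q`: if all were multiples of `q`, then `c < q`
  -- would put `(x₁, x₂)` in the image
  · rintro ⟨x₁, x₂⟩ hx hxy
    rw [Finset.HasAntidiagonal.mem_antidiagonal] at hx
    by_cases hdvd : ∀ i, p ^ e ∣ x₂ i
    · have hx₂ : x₂ = p ^ e • (x₂ ⌊/⌋ p ^ e) :=
        Finsupp.ext fun i => by simp [Nat.mul_div_cancel' (hdvd i)]
      rw [hx₂] at hx
      obtain ⟨htD, rfl⟩ := Finsupp.le_and_eq_of_add_smul_eq hc hx
      exact absurd ⟨(D - x₂ ⌊/⌋ p ^ e, x₂ ⌊/⌋ p ^ e), by simpa using tsub_add_cancel_of_le htD,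
        Prod.ext rfl hx₂.symm⟩ hxy
    · obtain ⟨i, hi⟩ := not_forall.1 hdvd
      rw [coeff_pow_expChar_pow_of_not_dvd p e g hi, mul_zero, map_zero]
  · rintro ⟨y₁, y₂⟩ -
    rw [coeff_frobeniusRoot, coeff_smul_pow_expChar_pow, map_mul, ← iterateFrobeniusEquiv_def,
      RingEquiv.symm_apply_apply]

lemma frobeniusRoot_mem_of_mem_frobeniusPower {c : σ →₀ ℕ} (hc : ∀ i, c i < p ^ e)
    {J : Ideal (MvPowerSeries σ k)} {x : MvPowerSeries σ k} (hx : x ∈ frobeniusPower J (p ^ e)) :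
    frobeniusRoot p e c x ∈ J := by
  suffices ∀ r, frobeniusRoot p e c (r * x) ∈ J by simpa using this 1
  induction hx using Submodule.span_induction with
  | mem x hx =>
    obtain ⟨y, hy, rfl⟩ := hx
    intro r
    rw [frobeniusRoot_mul_pow p e hc]
    exact J.mul_mem_left _ hy
  | zero => simp
  | add x y _ _ hx hy =>
    intro r
    rw [mul_add, map_add]
    exact J.add_mem (hx r) (hy r)
  | smul a x _ hx =>
    intro r
    rw [smul_eq_mul, ← mul_assoc]
    exact hx _

end FrobeniusRoot

section StanleyReisner

variable {σ R : Type*} [CommSemiring R] [Fintype σ] [DecidableEq σ]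

lemma iInf_span_X_sdiff_eq_span_prod_X {ι : Type*} (F : ι → Finset σ) :
    ⨅ j, Ideal.span (X '' ↑(Finset.univ \ F j)) =
      Ideal.span ((fun A => ∏ i ∈ A, (X i : MvPowerSeries σ R)) '' {A | ∀ j, ¬ A ⊆ F j}) := by
  refine le_antisymm (fun f hf => mem_span_prod_X_of_support_mem _ fun d hd j hdF => ?_) ?_
  · obtain ⟨i, hi, hdi⟩ := mem_span_X_image_iff.1 (Submodule.mem_iInf _ |>.1 hf j) d hd
    exact (Finset.mem_sdiff.1 hi).2 (hdF (Finsupp.mem_support_iff.2 hdi))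
  · refine Ideal.span_le.2 ?_
    rintro _ ⟨A, hA, rfl⟩
    refine Submodule.mem_iInf _ |>.2 fun j => ?_
    obtain ⟨i, hiA, hiF⟩ := Finset.not_subset.1 (hA j)
    exact Ideal.mem_of_dvd _ (Finset.dvd_prod_of_mem X hiA)
      (Ideal.subset_span ⟨i, by simpa using hiF, rfl⟩)

lemma prod_X_notMem_span_X_sdiff [Nontrivial R] (B : Finset σ) :
    ∏ i ∈ B, (X i : MvPowerSeries σ R) ∉ Ideal.span (X '' ↑(Finset.univ \ B)) := by
  rw [mem_span_X_image_iff, prod_X_eq_monomial]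
  intro h
  obtain ⟨i, hi, hBi⟩ := h (sqfreeExp B) (by simp)
  exact hBi (by simp [sqfreeExp_apply, (Finset.mem_sdiff.1 hi).2])

end StanleyReisner

end MvPowerSeries

lemma Finsupp.exists_smul_ceilDiv_add_eq {σ : Type*} [Fintype σ] {q : ℕ} (hq : 0 < q)
    (d : σ →₀ ℕ) : ∃ c : σ →₀ ℕ, (∀ i, c i < q) ∧
      q • (d ⌈/⌉ q) + c = (q - 1) • sqfreeExp Finset.univ + d := by
  classical
  refine ⟨Finsupp.equivFunOnFinite.symm fun i => (d i + (q - 1)) % q, fun i => Nat.mod_lt _ hq, ?_⟩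
  ext i
  have := Nat.div_add_mod (d i + (q - 1)) q
  have hpred : d i + q - 1 = d i + (q - 1) := by omega
  simp only [Finsupp.add_apply, Finsupp.smul_apply, smul_eq_mul, Finsupp.ceilDiv_apply,
    Nat.ceilDiv_eq_add_pred_div, hpred, Finsupp.coe_equivFunOnFinite_symm,
    sqfreeExp_apply, Finset.mem_univ, if_true, mul_one]
  omega

section Compatible

variable {σ k : Type*} [Fintype σ] [CommRing k] {p e : ℕ} [ExpChar k p] [PerfectRing k p]
  {J : Ideal (MvPowerSeries σ k)}

namespace IsFrobeniusCompatible

lemma frobeniusRoot_mem (hJ : IsFrobeniusCompatible ((∏ i, X i) ^ (p ^ e - 1)) (p ^ e) J)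
    {f : MvPowerSeries σ k} (hf : f ∈ J) {c : σ →₀ ℕ} (hc : ∀ i, c i < p ^ e) :
    frobeniusRoot p e c ((∏ i, X i) ^ (p ^ e - 1) * f) ∈ J :=
  frobeniusRoot_mem_of_mem_frobeniusPower p e hc (hJ f hf)

lemma exists_coeff_ceilDiv_ne_zero
    (hJ : IsFrobeniusCompatible ((∏ i, X i) ^ (p ^ e - 1)) (p ^ e) J)
    {f : MvPowerSeries σ k} (hf : f ∈ J) {d : σ →₀ ℕ} (hd : coeff d f ≠ 0) :
    ∃ g ∈ J, coeff (d ⌈/⌉ p ^ e) g ≠ 0 := by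
  have hq : 0 < p ^ e := Nat.pos_of_ne_zero (pow_ne_zero e (expChar_ne_zero k p))
  obtain ⟨c, hc, hcd⟩ := Finsupp.exists_smul_ceilDiv_add_eq hq d
  refine ⟨_, hJ.frobeniusRoot_mem hf hc, ?_⟩
  rw [coeff_frobeniusRoot, hcd, prod_X_pow_eq_monomial, coeff_add_monomial_mul, one_mul]
  exact (RingEquiv.map_ne_zero_iff _).2 hd

lemma exists_coeff_sqfreeExp_support_ne_zero (hq : 1 < p ^ e)
    (hJ : IsFrobeniusCompatible ((∏ i, X i) ^ (p ^ e - 1)) (p ^ e) J)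
    {f : MvPowerSeries σ k} (hf : f ∈ J) {d : σ →₀ ℕ} (hd : coeff d f ≠ 0) :
    ∃ g ∈ J, coeff (sqfreeExp d.support) g ≠ 0 := by
  induction d using WellFoundedLT.induction generalizing f with
  | _ d ih =>
    by_cases hfix : d ⌈/⌉ p ^ e = d
    · exact ⟨f, hf, by rwa [sqfreeExp_support_eq_self_of_ceilDiv_eq_self hq hfix]⟩
    · obtain ⟨g, hg, hgd⟩ := hJ.exists_coeff_ceilDiv_ne_zero hf hd
      rw [← Finsupp.support_ceilDiv (by omega : 0 < p ^ e) d]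
      exact ih _ (lt_of_le_of_ne (Finsupp.ceilDiv_le_self (by omega) d) hfix) hg hgd

end IsFrobeniusCompatible

end Compatible

section CompatibleField

variable {σ k : Type*} [Fintype σ] [Field k] {p e : ℕ} [ExpChar k p] [PerfectRing k p]
  {J : Ideal (MvPowerSeries σ k)}

namespace IsFrobeniusCompatible

lemma prod_X_mem_of_coeff_ne_zero (hq : 1 < p ^ e)
    (hJ : IsFrobeniusCompatible ((∏ i, X i) ^ (p ^ e - 1)) (p ^ e) J)
    {g : MvPowerSeries σ k} (hg : g ∈ J) {B : Finset σ} (hB : coeff (sqfreeExp B) g ≠ 0) :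
    ∏ i ∈ B, X i ∈ J := by
  classical
  -- `c` vanishes on `B`, so the exponents of the root cannot drop to `0` on `B`
  let c : σ →₀ ℕ := (p ^ e - 1) • sqfreeExp Bᶜ
  have hc : ∀ i, c i < p ^ e := fun i => by
    simp only [c, Finsupp.smul_apply, smul_eq_mul, sqfreeExp_apply]
    split_ifs <;> omega
  have hcB : p ^ e • sqfreeExp B + c = (p ^ e - 1) • sqfreeExp Finset.univ + sqfreeExp B := by
    ext i
    simp only [c, Finsupp.add_apply, Finsupp.smul_apply, smul_eq_mul, sqfreeExp_apply,
      Finset.mem_compl, Finset.mem_univ, if_true]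
    split_ifs <;> omega
  rw [prod_X_eq_monomial]
  refine monomial_one_mem_of_forall_le (hJ.frobeniusRoot_mem hg hc) (fun D hD => ?_) ?_
  · rw [coeff_frobeniusRoot, prod_X_pow_eq_monomial, coeff_monomial_mul] at hD
    split_ifs at hD with hle
    · intro i
      have := hle i
      simp only [c, Finsupp.add_apply, Finsupp.smul_apply, smul_eq_mul, sqfreeExp_apply,
        Finset.mem_compl, Finset.mem_univ, if_true] at this ⊢
      split_ifs at this ⊢ with hi
      · rcases Nat.eq_zero_or_pos (D i) with h0 | h0
        · rw [h0] at this
          omega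
        · exact h0
      · exact Nat.zero_le _
    · exact absurd (map_zero _) hD
  · rw [coeff_frobeniusRoot, hcB, prod_X_pow_eq_monomial, coeff_add_monomial_mul, one_mul]
    exact ((RingEquiv.map_ne_zero_iff _).2 hB).isUnit

lemma prod_X_mem_of_not_le [DecidableEq σ] (hq : 1 < p ^ e)
    (hJ : IsFrobeniusCompatible ((∏ i, X i) ^ (p ^ e - 1)) (p ^ e) J) (B : Finset σ)
    (hB : ¬ J ≤ Ideal.span (X '' ↑(Finset.univ \ B))) : ∏ i ∈ B, X i ∈ J := by
  obtain ⟨f, hfJ, hf⟩ := SetLike.not_le_iff_exists.1 hB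
  obtain ⟨d, hd, hdB⟩ : ∃ d, coeff d f ≠ 0 ∧ d.support ⊆ B := by
    by_contra! h
    refine hf (mem_span_X_image_iff.2 fun d hd => ?_)
    obtain ⟨i, hid, hiB⟩ := Finset.not_subset.1 (h d hd)
    exact ⟨i, by simpa using hiB, Finsupp.mem_support_iff.1 hid⟩
  obtain ⟨g, hg, hgd⟩ := hJ.exists_coeff_sqfreeExp_support_ne_zero hq hfJ hd
  rw [← Finset.prod_sdiff hdB]
  exact J.mul_mem_left _ (hJ.prod_X_mem_of_coeff_ne_zero hq hg hgd)

end IsFrobeniusCompatible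

end CompatibleField

theorem stanley_reisner_smallest_compatible_ideal_general {k : Type*} [Field k] (p : ℕ)
    [Fact p.Prime] [CharP k p] [PerfectRing k p] (n : ℕ) (e q : ℕ) (he : 1 ≤ e)
    (hq : q = p ^ e) (m : ℕ)
    (F : Fin m → Finset (Fin n))
    (z : MvPowerSeries (Fin n) k)
    (hz : z = (∏ i : Fin n, (MvPowerSeries.X i : MvPowerSeries (Fin n) k)) ^ (q - 1))
    (I : Ideal (MvPowerSeries (Fin n) k))
    (hI : I = ⨅ j, varIdeal k (Finset.univ \ F j))
    (J₀ : Ideal (MvPowerSeries (Fin n) k))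
    (hJ₀ : J₀ = I ⊔ Ideal.span (Set.range fun j =>
      ∏ i ∈ F j, (MvPowerSeries.X i : MvPowerSeries (Fin n) k))) :
    (∀ f ∈ J₀, z * f ∈ frobeniusPower J₀ q) ∧
      (∀ j, ¬ J₀ ≤ varIdeal k (Finset.univ \ F j)) ∧
      (∀ J : Ideal (MvPowerSeries (Fin n) k), I ≤ J →
        (∀ f ∈ J, z * f ∈ frobeniusPower J q) →
        (∀ j, ¬ J ≤ varIdeal k (Finset.univ \ F j)) → J₀ ≤ J) ∧
      Ideal.map (Ideal.Quotient.mk I) J₀ =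
        Ideal.span (Set.range fun j => Ideal.Quotient.mk I
          (∏ i ∈ F j, (MvPowerSeries.X i : MvPowerSeries (Fin n) k))) := by
  subst hq hz
  have hq : 1 < p ^ e := Nat.one_lt_pow (by omega) (Nat.Prime.one_lt Fact.out)
  have hI' : I = Ideal.span ((fun A => ∏ i ∈ A, X i) '' {A | ∀ j, ¬ A ⊆ F j}) :=
    hI.trans (iInf_span_X_sdiff_eq_span_prod_X F)
  have hJ₀' : J₀ =
      Ideal.span ((fun A => ∏ i ∈ A, X i) '' ({A | ∀ j, ¬ A ⊆ F j} ∪ Set.range F)) := by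
    rw [hJ₀, hI', Set.image_union, Ideal.span_union, ← Set.range_comp]
    rfl
  have hfacet j : ∏ i ∈ F j, X i ∈ J₀ := hJ₀ ▸ Ideal.mem_sup_right (Ideal.subset_span ⟨j, rfl⟩)
  refine ⟨?_, fun j hle => prod_X_notMem_span_X_sdiff (F j) (hle (hfacet j)),
    fun J hIJ hJ hnot => ?_, ?_⟩
  · rw [hJ₀']
    exact isFrobeniusCompatible_span_prod X (by omega) _
  · rw [hJ₀]
    refine sup_le hIJ (Ideal.span_le.2 ?_)
    rintro _ ⟨j, rfl⟩
    exact IsFrobeniusCompatible.prod_X_mem_of_not_le hq hJ (F j) (hnot j)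
  · rw [hJ₀, Ideal.map_sup, Ideal.map_quotient_self, bot_sup_eq, Ideal.map_span, ← Set.range_comp]
    rfl

/-- For the Stanley–Reisner ideal `I = ⋂ⱼ P_{Fⱼᶜ}` of a simplicial complex
with facets `F₁, …, F_m`, the ideal `J₀ = I + (x_{F₁}, …, x_{F_m})` is the smallest ideal of
`S` that is compatible with `z = (x₁⋯xₙ)^{q−1}`, contains `I` and is not contained in any
minimal prime `P_{Fⱼᶜ}` of `I`; consequently, the test ideal `τ(R,φ)` of `R = S/I` is
generated by the images of the facet monomials. -/
theorem stanley_reisner_smallest_compatible_ideal {k : Type*} [Field k] (p : ℕ)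
    [Fact p.Prime] [CharP k p] [PerfectRing k p] (n : ℕ) (e q : ℕ) (he : 1 ≤ e)
    (hq : q = p ^ e) (m : ℕ) (hm : 1 ≤ m)
    (F : Fin m → Finset (Fin n)) (hFne : ∀ j, (F j).Nonempty)
    (hFincomp : ∀ i j, i ≠ j → ¬ F i ⊆ F j)
    (z : MvPowerSeries (Fin n) k)
    (hz : z = (∏ i : Fin n, (MvPowerSeries.X i : MvPowerSeries (Fin n) k)) ^ (q - 1))
    (I : Ideal (MvPowerSeries (Fin n) k))
    (hI : I = ⨅ j, varIdeal k (Finset.univ \ F j))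
    (J₀ : Ideal (MvPowerSeries (Fin n) k))
    (hJ₀ : J₀ = I ⊔ Ideal.span (Set.range fun j =>
      ∏ i ∈ F j, (MvPowerSeries.X i : MvPowerSeries (Fin n) k))) :
    (∀ f ∈ J₀, z * f ∈ frobeniusPower J₀ q) ∧
      (∀ j, ¬ J₀ ≤ varIdeal k (Finset.univ \ F j)) ∧
      (∀ J : Ideal (MvPowerSeries (Fin n) k), I ≤ J →
        (∀ f ∈ J, z * f ∈ frobeniusPower J q) →
        (∀ j, ¬ J ≤ varIdeal k (Finset.univ \ F j)) → J₀ ≤ J) ∧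
      Ideal.map (Ideal.Quotient.mk I) J₀ =
        Ideal.span (Set.range fun j => Ideal.Quotient.mk I
          (∏ i ∈ F j, (MvPowerSeries.X i : MvPowerSeries (Fin n) k))) :=
  stanley_reisner_smallest_compatible_ideal_general p n e q he hq m F z hz I hI J₀ hJ₀
end
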